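/- If the car-following model is linear, then for any threshold η ≥ 0 the safe scenario set S = {x ∈ Ω : min_{0 ≤ t ≤ T} TTC_t(x) > η} is convex, where Ω is the box of scenarios satisfying the bounds d_min ≤ d_0 ≤ d_max, v_min ≤ v^l_t, v^f_t ≤ v_max, a_min ≤ a^l_t ≤ a_max. -/
import Mathlib


/-- Discrete-time linear car-following trajectory: state `(d, vf, vl)`; `a t` is the leader's
acceleration and the follower uses the linear law `af = k1*vf + k2*vl + k3*d + k4`. -/
noncomputable def traj (Δt k1 k2 k3 k4 : ℝ) (a : ℕ → ℝ) (init : ℝ × ℝ × ℝ) : ℕ → ℝ × ℝ × ℝ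
  | 0 => init
  | t + 1 =>
    let s := traj Δt k1 k2 k3 k4 a init t
    let d := s.1
    let vf := s.2.1
    let vl := s.2.2
    let af := k1 * vf + k2 * vl + k3 * d + k4
    (d + Δt * vl + Δt ^ 2 / 2 * a t - Δt * vf - Δt ^ 2 / 2 * af,
     vf + Δt * af,
     vl + Δt * a t)

/-- `traj` is affine in the scenario. -/
lemma traj_affine (Δt k1 k2 k3 k4 : ℝ) (a b : ℕ → ℝ) (i j : ℝ × ℝ × ℝ)
    (p q : ℝ) (hpq : p + q = 1) (t : ℕ) :
    traj Δt k1 k2 k3 k4 (fun s => p * a s + q * b s)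
      (p * i.1 + q * j.1, p * i.2.1 + q * j.2.1, p * i.2.2 + q * j.2.2) t =
    (p * (traj Δt k1 k2 k3 k4 a i t).1 + q * (traj Δt k1 k2 k3 k4 b j t).1,
     p * (traj Δt k1 k2 k3 k4 a i t).2.1 + q * (traj Δt k1 k2 k3 k4 b j t).2.1,
     p * (traj Δt k1 k2 k3 k4 a i t).2.2 + q * (traj Δt k1 k2 k3 k4 b j t).2.2) := by
  induction t with
  | zero => simp [traj]
  | succ t ih =>
      simp only [traj, ih]
      have hq : q = 1 - p := by linarith
      refine Prod.ext ?_ (Prod.ext ?_ ?_) <;> simp <;> subst hq <;> ring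

/-- Strict positivity of convex combinations. -/
lemma comb_pos {p q A B : ℝ} (hp : 0 ≤ p) (hq : 0 ≤ q) (hpq : p + q = 1)
    (hA : 0 < A) (hB : 0 < B) : 0 < p * A + q * B := by
  rcases eq_or_lt_of_le hp with h | h
  · have : q = 1 := by linarith
    simp [← h, this]; linarith
  · have := mul_pos h hA
    have := mul_nonneg hq hB.le
    linarith

/-- Lower bound for convex combinations. -/
lemma comb_le {p q a b lo : ℝ} (hp : 0 ≤ p) (hq : 0 ≤ q) (hpq : p + q = 1)
    (h1 : lo ≤ a) (h2 : lo ≤ b) : lo ≤ p * a + q * b := by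
  have hq' : q = 1 - p := by linarith
  subst hq'
  nlinarith [mul_le_mul_of_nonneg_left h1 hp, mul_le_mul_of_nonneg_left h2 hq]

/-- Upper bound for convex combinations. -/
lemma comb_ge {p q a b hi : ℝ} (hp : 0 ≤ p) (hq : 0 ≤ q) (hpq : p + q = 1)
    (h1 : a ≤ hi) (h2 : b ≤ hi) : p * a + q * b ≤ hi := by
  have hq' : q = 1 - p := by linarith
  subst hq'
  nlinarith [mul_le_mul_of_nonneg_left h1 hp, mul_le_mul_of_nonneg_left h2 hq]

/-- If the car-following model is linear, then for any threshold `η ≥ 0` the safe scenario set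
`S = {x ∈ Ω : min_{0 ≤ t ≤ T} TTC_t(x) > η}` is convex, where a scenario
`x = (d₀, v^f₀, v^l₀, a^l)` satisfies the box constraints on the initial gap, the speeds at
all times `t ≤ T`, and the lead accelerations at all times `t < T`, and safety at time `t`
(i.e. `TTC_t > η`) is equivalent to `d_t > 0 ∧ d_t > η (v^f_t − v^l_t)`. -/
theorem safe_scenario_set_convex (Δt k1 k2 k3 k4 η : ℝ) (hη : 0 ≤ η) (T : ℕ)
    (dmin dmax vmin vmax amin amax : ℝ) :
    Convex ℝ {x : ℝ × ℝ × ℝ × (ℕ → ℝ) |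
      (dmin ≤ x.1 ∧ x.1 ≤ dmax) ∧
      (∀ t ≤ T,
        vmin ≤ (traj Δt k1 k2 k3 k4 x.2.2.2 (x.1, x.2.1, x.2.2.1) t).2.2 ∧
        (traj Δt k1 k2 k3 k4 x.2.2.2 (x.1, x.2.1, x.2.2.1) t).2.2 ≤ vmax ∧
        vmin ≤ (traj Δt k1 k2 k3 k4 x.2.2.2 (x.1, x.2.1, x.2.2.1) t).2.1 ∧
        (traj Δt k1 k2 k3 k4 x.2.2.2 (x.1, x.2.1, x.2.2.1) t).2.1 ≤ vmax) ∧
      (∀ t < T, amin ≤ x.2.2.2 t ∧ x.2.2.2 t ≤ amax) ∧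
      (∀ t ≤ T,
        (traj Δt k1 k2 k3 k4 x.2.2.2 (x.1, x.2.1, x.2.2.1) t).1 > 0 ∧
        (traj Δt k1 k2 k3 k4 x.2.2.2 (x.1, x.2.1, x.2.2.1) t).1 >
          η * ((traj Δt k1 k2 k3 k4 x.2.2.2 (x.1, x.2.1, x.2.2.1) t).2.1 -
               (traj Δt k1 k2 k3 k4 x.2.2.2 (x.1, x.2.1, x.2.2.1) t).2.2))} := by
  rintro x ⟨hx1, hx2, hx3, hx4⟩ y ⟨hy1, hy2, hy3, hy4⟩ p q hp hq hpq
  have key : ∀ t : ℕ,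
      traj Δt k1 k2 k3 k4 (p • x + q • y).2.2.2
        ((p • x + q • y).1, (p • x + q • y).2.1, (p • x + q • y).2.2.1) t =
      (p * (traj Δt k1 k2 k3 k4 x.2.2.2 (x.1, x.2.1, x.2.2.1) t).1 +
         q * (traj Δt k1 k2 k3 k4 y.2.2.2 (y.1, y.2.1, y.2.2.1) t).1,
       p * (traj Δt k1 k2 k3 k4 x.2.2.2 (x.1, x.2.1, x.2.2.1) t).2.1 +
         q * (traj Δt k1 k2 k3 k4 y.2.2.2 (y.1, y.2.1, y.2.2.1) t).2.1,
       p * (traj Δt k1 k2 k3 k4 x.2.2.2 (x.1, x.2.1, x.2.2.1) t).2.2 +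
         q * (traj Δt k1 k2 k3 k4 y.2.2.2 (y.1, y.2.1, y.2.2.1) t).2.2) := by
    intro t
    have := traj_affine Δt k1 k2 k3 k4 x.2.2.2 y.2.2.2 (x.1, x.2.1, x.2.2.1)
      (y.1, y.2.1, y.2.2.1) p q hpq t
    simpa [Prod.smul_def, Prod.add_def, Pi.add_def, smul_eq_mul] using this
  refine ⟨?_, ?_, ?_, ?_⟩
  · constructor
    · have : (p • x + q • y).1 = p * x.1 + q * y.1 := by simp [smul_eq_mul]
      rw [this]; exact comb_le hp hq hpq hx1.1 hy1.1
    · have : (p • x + q • y).1 = p * x.1 + q * y.1 := by simp [smul_eq_mul]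
      rw [this]; exact comb_ge hp hq hpq hx1.2 hy1.2
  · intro t ht
    rw [key t]
    obtain ⟨a1, a2, a3, a4⟩ := hx2 t ht
    obtain ⟨b1, b2, b3, b4⟩ := hy2 t ht
    exact ⟨comb_le hp hq hpq a1 b1, comb_ge hp hq hpq a2 b2,
      comb_le hp hq hpq a3 b3, comb_ge hp hq hpq a4 b4⟩
  · intro t ht
    obtain ⟨a1, a2⟩ := hx3 t ht
    obtain ⟨b1, b2⟩ := hy3 t ht
    have : (p • x + q • y).2.2.2 t = p * x.2.2.2 t + q * y.2.2.2 t := by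
      simp [smul_eq_mul]
    rw [this]
    exact ⟨comb_le hp hq hpq a1 b1, comb_ge hp hq hpq a2 b2⟩
  · intro t ht
    rw [key t]
    obtain ⟨a1, a2⟩ := hx4 t ht
    obtain ⟨b1, b2⟩ := hy4 t ht
    constructor
    · exact comb_pos hp hq hpq a1 b1
    · have h1 : 0 < (traj Δt k1 k2 k3 k4 x.2.2.2 (x.1, x.2.1, x.2.2.1) t).1 -
        η * ((traj Δt k1 k2 k3 k4 x.2.2.2 (x.1, x.2.1, x.2.2.1) t).2.1 -
          (traj Δt k1 k2 k3 k4 x.2.2.2 (x.1, x.2.1, x.2.2.1) t).2.2) := by linarith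
      have h2 : 0 < (traj Δt k1 k2 k3 k4 y.2.2.2 (y.1, y.2.1, y.2.2.1) t).1 -
        η * ((traj Δt k1 k2 k3 k4 y.2.2.2 (y.1, y.2.1, y.2.2.1) t).2.1 -
          (traj Δt k1 k2 k3 k4 y.2.2.2 (y.1, y.2.1, y.2.2.1) t).2.2) := by linarith
      have h3 := comb_pos hp hq hpq h1 h2
      simp only [gt_iff_lt]
      nlinarith [h3]
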